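/- arXiv:2110.14194 — 2 statements merged into one kernel-verified Lean document; each statement's English description precedes it below -/
import Mathlib

section
/- The inclusion ideal graph In(S) of a semigroup S is disconnected if and only if S is the union of exactly two minimal left ideals. -/
open Set

variable {S : Type*}

/-- A left ideal of a semigroup: a nonempty subset `I` with `S * I ⊆ I`. -/
def IsLeftIdeal [Semigroup S] (I : Set S) : Prop :=
  I.Nonempty ∧ ∀ s : S, ∀ x ∈ I, s * x ∈ I

/-- A nontrivial left ideal is a left ideal different from `S`. -/
def IsNontrivialLeftIdeal [Semigroup S] (I : Set S) : Prop :=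
  IsLeftIdeal I ∧ I ≠ Set.univ

/-- A minimal left ideal: a nontrivial left ideal properly containing no left ideal. -/
def IsMinimalLeftIdeal [Semigroup S] (I : Set S) : Prop :=
  IsNontrivialLeftIdeal I ∧ ∀ J : Set S, IsLeftIdeal J → J ⊆ I → J = I

/-- A maximal left ideal: a nontrivial left ideal properly contained in no
nontrivial left ideal. -/
def IsMaximalLeftIdeal [Semigroup S] (I : Set S) : Prop :=
  IsNontrivialLeftIdeal I ∧ ∀ J : Set S, IsNontrivialLeftIdeal J → I ⊆ J → J = I

/-- Vertices of the inclusion ideal graph: the nontrivial left ideals of `S`. -/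
def IdealVert (S : Type*) [Semigroup S] := {I : Set S // IsNontrivialLeftIdeal I}

/-- The inclusion ideal graph of a semigroup: distinct nontrivial left ideals are
adjacent iff one properly contains the other. -/
def inclusionIdealGraph (S : Type*) [Semigroup S] : SimpleGraph (IdealVert S) :=
  SimpleGraph.fromRel (fun I J => I.1 ⊂ J.1)

/-- principal left ideal generated by `a`. -/
def princ [Semigroup S] (a : S) : Set S := insert a {x | ∃ s : S, s * a = x}

lemma princ_isLeftIdeal [Semigroup S] (a : S) : IsLeftIdeal (princ a) := by
  refine ⟨⟨a, Or.inl rfl⟩, ?_⟩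
  rintro s x (rfl | ⟨t, rfl⟩)
  · exact Or.inr ⟨s, rfl⟩
  · exact Or.inr ⟨s * t, mul_assoc s t a⟩

lemma princ_subset [Semigroup S] {I : Set S} (hI : IsLeftIdeal I) {a : S} (ha : a ∈ I) :
    princ a ⊆ I := by
  rintro x (rfl | ⟨s, rfl⟩)
  · exact ha
  · exact hI.2 s _ ha

lemma union_isLeftIdeal [Semigroup S] {I J : Set S} (hI : IsLeftIdeal I) (hJ : IsLeftIdeal J) :
    IsLeftIdeal (I ∪ J) := by
  refine ⟨hI.1.mono subset_union_left, ?_⟩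
  rintro s x (hx | hx)
  · exact Or.inl (hI.2 s x hx)
  · exact Or.inr (hJ.2 s x hx)

lemma adj_iff [Semigroup S] (u v : IdealVert S) :
    (inclusionIdealGraph S).Adj u v ↔ u ≠ v ∧ (u.1 ⊂ v.1 ∨ v.1 ⊂ u.1) := by
  simp [inclusionIdealGraph, SimpleGraph.fromRel_adj]

lemma reach_of_subset [Semigroup S] (u v : IdealVert S) (h : u.1 ⊆ v.1) :
    (inclusionIdealGraph S).Reachable u v := by
  rcases eq_or_ne u v with rfl | hne
  · exact SimpleGraph.Reachable.refl u
  · refine SimpleGraph.Adj.reachable ((adj_iff u v).mpr ⟨hne, Or.inl ?_⟩)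
    exact h.ssubset_of_ne (fun he => hne (Subtype.ext he))

/-- If a vertex `u` is disconnected from `v` and their sets are disjoint, `u.1` is minimal. -/
lemma min_of_disconn [Semigroup S] (u v : IdealVert S)
    (hnr : ¬ (inclusionIdealGraph S).Reachable u v) (hd : u.1 ∩ v.1 = ∅) :
    IsMinimalLeftIdeal u.1 := by
  refine ⟨u.2, fun K hK hKu => ?_⟩
  have hKnt : IsNontrivialLeftIdeal K :=
    ⟨hK, fun he => u.2.2 (univ_subset_iff.mp (he ▸ hKu))⟩
  set W : IdealVert S := ⟨K, hKnt⟩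
  have hWu : (inclusionIdealGraph S).Reachable W u := reach_of_subset W u hKu
  -- K ∪ v.1 must be univ
  have hKv : K ∪ v.1 = univ := by
    by_contra hne
    have hnt : IsNontrivialLeftIdeal (K ∪ v.1) :=
      ⟨union_isLeftIdeal hK v.2.1, hne⟩
    set W2 : IdealVert S := ⟨K ∪ v.1, hnt⟩
    have h1 : (inclusionIdealGraph S).Reachable W W2 :=
      reach_of_subset W W2 subset_union_left
    have h2 : (inclusionIdealGraph S).Reachable v W2 :=
      reach_of_subset v W2 subset_union_right
    exact hnr (hWu.symm.trans (h1.trans h2.symm))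
  -- then u.1 ⊆ K
  have : u.1 ⊆ K := by
    intro a ha
    have : a ∈ K ∪ v.1 := hKv ▸ mem_univ a
    rcases this with h | h
    · exact h
    · exact absurd (mem_inter ha h) (by simp [hd])
  exact hKu.antisymm this

lemma no_adj_reach [Semigroup S] {u v : IdealVert S}
    (hne : ∀ a b : IdealVert S, ¬ (inclusionIdealGraph S).Adj a b)
    (h : (inclusionIdealGraph S).Reachable u v) : u = v := by
  obtain ⟨w⟩ := h
  cases w with
  | nil => rfl
  | cons ha _ => exact absurd ha (hne _ _)

/-- `In(S)` is disconnected iff `S` is the union of exactly two minimal left ideals. -/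
theorem stmt6 [Semigroup S] :
    ¬ (inclusionIdealGraph S).Preconnected ↔
      ∃ I₁ I₂ : Set S, IsMinimalLeftIdeal I₁ ∧ IsMinimalLeftIdeal I₂ ∧ I₁ ≠ I₂ ∧
        I₁ ∪ I₂ = Set.univ ∧ ∀ J : Set S, IsMinimalLeftIdeal J → J = I₁ ∨ J = I₂ := by
  constructor
  · -- forward direction
    intro h
    rw [SimpleGraph.Preconnected] at h
    push_neg at h
    obtain ⟨u, v, hnr⟩ := h
    -- u.1 ∪ v.1 = univ
    have hU : u.1 ∪ v.1 = univ := by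
      by_contra hne
      have hnt : IsNontrivialLeftIdeal (u.1 ∪ v.1) :=
        ⟨union_isLeftIdeal u.2.1 v.2.1, hne⟩
      set W : IdealVert S := ⟨u.1 ∪ v.1, hnt⟩
      exact hnr ((reach_of_subset u W subset_union_left).trans
        (reach_of_subset v W subset_union_right).symm)
    -- disjoint
    have hd : u.1 ∩ v.1 = ∅ := by
      by_contra hne
      obtain ⟨x, hxu, hxv⟩ := nonempty_iff_ne_empty.mpr hne
      have hnt : IsNontrivialLeftIdeal (princ x) :=
        ⟨princ_isLeftIdeal x, fun he => u.2.2 (univ_subset_iff.mp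
          (he ▸ princ_subset u.2.1 hxu))⟩
      set W : IdealVert S := ⟨princ x, hnt⟩
      exact hnr ((reach_of_subset W u (princ_subset u.2.1 hxu)).symm.trans
        (reach_of_subset W v (princ_subset v.2.1 hxv)))
    have hmu : IsMinimalLeftIdeal u.1 := min_of_disconn u v hnr hd
    have hmv : IsMinimalLeftIdeal v.1 :=
      min_of_disconn v u (fun h => hnr h.symm) (by rw [inter_comm]; exact hd)
    refine ⟨u.1, v.1, hmu, hmv, ?_, hU, ?_⟩
    · intro he
      exact hnr (Subtype.ext he ▸ SimpleGraph.Reachable.refl u)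
    · intro M hM
      obtain ⟨x, hx⟩ := hM.1.1.1
      have : x ∈ u.1 ∪ v.1 := hU ▸ mem_univ x
      rcases this with hxu | hxv
      · left
        have h1 : princ x = M := hM.2 _ (princ_isLeftIdeal x) (princ_subset hM.1.1 hx)
        have h2 : princ x = u.1 := hmu.2 _ (princ_isLeftIdeal x) (princ_subset u.2.1 hxu)
        rw [← h1, h2]
      · right
        have h1 : princ x = M := hM.2 _ (princ_isLeftIdeal x) (princ_subset hM.1.1 hx)
        have h2 : princ x = v.1 := hmv.2 _ (princ_isLeftIdeal x) (princ_subset v.2.1 hxv)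
        rw [← h1, h2]
  · -- backward direction
    rintro ⟨I₁, I₂, hm1, hm2, hne, hU, _⟩
    -- every nontrivial left ideal is I₁ or I₂
    have hclass : ∀ J : Set S, IsNontrivialLeftIdeal J → J = I₁ ∨ J = I₂ := by
      intro J hJ
      obtain ⟨a, ha⟩ := hJ.1.1
      have haU : a ∈ I₁ ∪ I₂ := hU ▸ mem_univ a
      have key : ∀ {A B : Set S}, IsMinimalLeftIdeal A → IsMinimalLeftIdeal B →
          A ∪ B = univ → a ∈ A → J = A := by
        intro A B hA hB hABu haA
        have hAJ : A ⊆ J := by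
          have h1 : princ a = A := hA.2 _ (princ_isLeftIdeal a) (princ_subset hA.1.1 haA)
          exact h1 ▸ princ_subset hJ.1 ha
        have hJA : J ⊆ A := by
          intro b hb
          by_contra hbA
          have hbB : b ∈ B := by
            have : b ∈ A ∪ B := hABu ▸ mem_univ b
            rcases this with h | h
            · exact absurd h hbA
            · exact h
          have hBJ : B ⊆ J := by
            have h1 : princ b = B := hB.2 _ (princ_isLeftIdeal b) (princ_subset hB.1.1 hbB)
            exact h1 ▸ princ_subset hJ.1 hb
          exact hJ.2 (univ_subset_iff.mp (hABu ▸ union_subset hAJ hBJ))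
        exact hJA.antisymm hAJ
      rcases haU with h | h
      · exact Or.inl (key hm1 hm2 hU h)
      · exact Or.inr (key hm2 hm1 (by rw [union_comm]; exact hU) h)
    -- the graph has no edges
    have hnoadj : ∀ a b : IdealVert S, ¬ (inclusionIdealGraph S).Adj a b := by
      intro a b hab
      rw [adj_iff] at hab
      obtain ⟨_, hss⟩ := hab
      have hcomp : ∀ {A B : Set S}, IsNontrivialLeftIdeal A → IsNontrivialLeftIdeal B →
          A ⊂ B → False := by
        intro A B hA hB hAB
        rcases hclass A hA with rfl | rfl <;> rcases hclass B hB with rfl | rfl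
        · exact hAB.ne rfl
        · exact hAB.ne (hm2.2 _ hm1.1.1 hAB.subset)
        · exact hAB.ne (hm1.2 _ hm2.1.1 hAB.subset)
        · exact hAB.ne rfl
      rcases hss with h | h
      · exact hcomp a.2 b.2 h
      · exact hcomp b.2 a.2 h
    intro hpre
    have hv1 : IsNontrivialLeftIdeal I₁ := hm1.1
    have hv2 : IsNontrivialLeftIdeal I₂ := hm2.1
    have := no_adj_reach hnoadj (hpre ⟨I₁, hv1⟩ ⟨I₂, hv2⟩)
    exact hne (congrArg Subtype.val this)
end

section
/- Let S be a completely simple semigroup with n ≥ 3 minimal left ideals. Then the automorphism group of In(S) is isomorphic to Sₙ × ℤ₂, and in particular has order 2·n!. -/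
/-!
Minimal left ideals of a completely simple semigroup are pairwise disjoint, and their union is a
two-sided ideal, hence all of `S`; so every left ideal is the union of the minimal ones it
contains, and `J ↦ {i | I i ⊆ J}` identifies `In(S)` with the comparability graph of nonempty
proper subsets of `{1, …, n}`. There a subset of size `k` has degree `2^k + 2^(n-k) - 4`, so the
singletons and their complements are exactly the vertices of maximal degree. Singletons are
pairwise non-adjacent, which for `n ≥ 3` forces an automorphism to send all singletons to
singletons or all to complements of singletons; and a vertex is determined by the singletons
equal or adjacent to it. Hence every automorphism is a permutation, possibly followed by
complementation.
-/

open Set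

variable {S : Type*}

/-- A (two-sided) ideal of a semigroup. -/
def IsIdeal [Semigroup S] (I : Set S) : Prop :=
  I.Nonempty ∧ (∀ s : S, ∀ x ∈ I, s * x ∈ I) ∧ (∀ s : S, ∀ x ∈ I, x * s ∈ I)

/-- A completely simple semigroup: simple (no proper two-sided ideal) and containing
a primitive idempotent. -/
def IsCompletelySimple (S : Type*) [Semigroup S] : Prop :=
  (∀ I : Set S, IsIdeal I → I = Set.univ) ∧
    ∃ e : S, e * e = e ∧ ∀ f : S, f * f = f → f * e = f → e * f = f → f = e

/-- The group structure on graph automorphisms. -/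
instance graphAutGroup {V : Type*} (G : SimpleGraph V) : Group (G ≃g G) where
  mul f g := g.trans f
  one := SimpleGraph.Iso.refl
  inv f := f.symm
  mul_assoc f g h := rfl
  one_mul f := rfl
  mul_one f := rfl
  inv_mul_cancel f := by
    ext v
    exact f.toEquiv.symm_apply_apply v

open SimpleGraph

lemma SimpleGraph.fromRel_adj_of_irrefl {V : Type*} {r : V → V → Prop} (hr : ∀ v, ¬ r v v)
    {v w : V} : (fromRel r).Adj v w ↔ r v w ∨ r w v := by
  rw [fromRel_adj, and_iff_right_iff_imp]
  rintro h rfl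
  exact h.elim (hr v) (hr v)

def SimpleGraph.Iso.autCongr {V W : Type*} {G : SimpleGraph V} {H : SimpleGraph W}
    (e : G ≃g H) : (G ≃g G) ≃* (H ≃g H) where
  toFun φ := (e.symm.trans φ).trans e
  invFun ψ := (e.trans ψ).trans e.symm
  left_inv φ := RelIso.ext fun v => by simp
  right_inv ψ := RelIso.ext fun v => by simp
  map_mul' φ ψ := RelIso.ext fun v => by simp [RelIso.mul_apply]

lemma two_pow_add_two_pow_eq_iff {k l : ℕ} (hk : 1 ≤ k) (hl : 1 ≤ l) :
    2 ^ k + 2 ^ l = 2 + 2 ^ (k + l - 1) ↔ k = 1 ∨ l = 1 := by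
  constructor
  · intro h
    by_contra! hkl
    have hk' : 2 ^ k ≤ 2 ^ (k + l - 2) := Nat.pow_le_pow_right two_pos (by omega)
    have hl' : 2 ^ l ≤ 2 ^ (k + l - 2) := Nat.pow_le_pow_right two_pos (by omega)
    have : 2 ^ (k + l - 1) = 2 * 2 ^ (k + l - 2) := by rw [← pow_succ']; congr 1; omega
    omega
  · rintro (rfl | rfl)
    · simp
    · simp [add_comm]

def involutionHom {G : Type*} [Group G] {g : G} (hg : g * g = 1) :
    Multiplicative (ZMod 2) →* G :=
  AddMonoidHom.toMultiplicativeLeft <| ZMod.lift 2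
    ⟨zmultiplesHom _ (Additive.ofMul g), by
      rw [zmultiplesHom_apply, ← ofMul_zpow, Nat.cast_ofNat, zpow_two, hg, ofMul_one]⟩

lemma involutionHom_ofAdd_one {G : Type*} [Group G] {g : G} (hg : g * g = 1) :
    involutionHom hg (Multiplicative.ofAdd 1) = g := by
  rw [← Int.cast_one (R := ZMod 2)]
  exact one_zsmul (Additive.ofMul g)

lemma Multiplicative.zmod_two_eq_one_or (ε : Multiplicative (ZMod 2)) :
    ε = 1 ∨ ε = ofAdd 1 := by
  revert ε; decide

section SubsetGraph

variable (α : Type*)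

abbrev NontrivialSubset := {A : Set α // A.Nonempty ∧ A ≠ univ}

def subsetGraph : SimpleGraph (NontrivialSubset α) := fromRel fun A B => A.1 ⊂ B.1

variable {α}

lemma subsetGraph_adj {A B : NontrivialSubset α} :
    (subsetGraph α).Adj A B ↔ A.1 ⊂ B.1 ∨ B.1 ⊂ A.1 :=
  fromRel_adj_of_irrefl fun A => ssubset_irrefl A.1

namespace NontrivialSubset

def single [Nontrivial α] (a : α) : NontrivialSubset α :=
  ⟨{a}, singleton_nonempty a, singleton_ne_univ a⟩

def compl (A : NontrivialSubset α) : NontrivialSubset α :=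
  ⟨A.1ᶜ, nonempty_compl.2 A.2.2, compl_ne_univ.2 A.2.1⟩

lemma compl_involutive :
    Function.Involutive (compl : NontrivialSubset α → NontrivialSubset α) :=
  fun A => Subtype.ext (compl_compl A.1)

def image (σ : Equiv.Perm α) (A : NontrivialSubset α) : NontrivialSubset α :=
  ⟨σ '' A.1, A.2.1.image σ, fun h =>
    A.2.2 (σ.injective.image_injective (h.trans (image_univ_of_surjective σ.surjective).symm))⟩

end NontrivialSubset

namespace subsetGraph

open NontrivialSubset

def complAut : subsetGraph α ≃g subsetGraph α where
  toFun := compl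
  invFun := compl
  left_inv := compl_involutive
  right_inv := compl_involutive
  map_rel_iff' {A B} := by
    rw [subsetGraph_adj, subsetGraph_adj]
    exact (or_congr compl_lt_compl_iff_lt compl_lt_compl_iff_lt).trans or_comm

def permAut (σ : Equiv.Perm α) : subsetGraph α ≃g subsetGraph α where
  toFun := image σ
  invFun := image σ.symm
  left_inv A := Subtype.ext (σ.symm_image_image A.1)
  right_inv A := Subtype.ext (σ.image_symm_image A.1)
  map_rel_iff' {A B} := by
    rw [subsetGraph_adj, subsetGraph_adj]
    exact or_congr σ.toOrderIsoSet.lt_iff_lt σ.toOrderIsoSet.lt_iff_lt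

def permHom : Equiv.Perm α →* (subsetGraph α ≃g subsetGraph α) where
  toFun := permAut
  map_one' := RelIso.ext fun A => Subtype.ext (image_id A.1)
  map_mul' σ τ := RelIso.ext fun A => Subtype.ext (image_image σ τ A.1).symm

lemma complAut_mul_self : (complAut : subsetGraph α ≃g subsetGraph α) * complAut = 1 :=
  RelIso.ext compl_involutive

lemma commute_permAut_complAut (σ : Equiv.Perm α) : Commute (permAut σ) complAut :=
  RelIso.ext fun A => Subtype.ext (σ.image_compl A.1)

def autHom : Equiv.Perm α × Multiplicative (ZMod 2) →* (subsetGraph α ≃g subsetGraph α) :=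
  permHom.noncommCoprod (involutionHom complAut_mul_self) fun σ ε => by
    rcases ε.zmod_two_eq_one_or with rfl | rfl
    · exact (map_one (involutionHom complAut_mul_self)).symm ▸ Commute.one_right _
    · exact (involutionHom_ofAdd_one complAut_mul_self).symm ▸ commute_permAut_complAut σ

lemma autHom_apply_one (σ : Equiv.Perm α) : autHom (σ, 1) = permAut σ := by
  simp [autHom, permHom]

lemma autHom_apply_ofAdd_one (σ : Equiv.Perm α) :
    autHom (σ, Multiplicative.ofAdd 1) = permAut σ * complAut := by
  simp [autHom, permHom, involutionHom_ofAdd_one]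

section Nontrivial

variable [Nontrivial α]

lemma single_injective : Function.Injective (single : α → NontrivialSubset α) :=
  fun _ _ h => singleton_injective (congrArg Subtype.val h)

lemma not_adj_single (a b : α) : ¬ (subsetGraph α).Adj (single a) (single b) := by
  rw [subsetGraph_adj]
  rintro (h | h) <;> exact singleton_ne_empty _ (ssubset_singleton_iff.1 h)

lemma mem_iff_single_eq_or_adj (A : NontrivialSubset α) (a : α) :
    a ∈ A.1 ↔ single a = A ∨ (subsetGraph α).Adj (single a) A := by
  rw [subsetGraph_adj, Subtype.ext_iff]
  constructor
  · intro ha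
    exact (singleton_subset_iff.2 ha).eq_or_ssubset.imp_right Or.inl
  · rintro (h | h | h)
    · exact h ▸ rfl
    · exact h.subset rfl
    · exact absurd (ssubset_singleton_iff.1 h) A.2.1.ne_empty

lemma aut_ext_single {φ ψ : subsetGraph α ≃g subsetGraph α}
    (h : ∀ a, φ (single a) = ψ (single a)) : φ = ψ := by
  set χ := ψ⁻¹ * φ
  have hχ (a : α) : χ (single a) = single a := ψ.symm_apply_eq.2 (h a)
  have hfix (A : NontrivialSubset α) : χ A = A := Subtype.ext <| ext fun a => by
    rw [mem_iff_single_eq_or_adj, mem_iff_single_eq_or_adj]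
    conv_rhs => rw [← χ.injective.eq_iff, ← χ.map_adj_iff, hχ]
  exact (inv_mul_eq_one.1 (RelIso.ext hfix)).symm

end Nontrivial

section Finite

variable [Finite α]

lemma ncard_ssubset_add_two (A : NontrivialSubset α) :
    {B : NontrivialSubset α | B.1 ⊂ A.1}.ncard + 2 = 2 ^ A.1.ncard := by
  have himage : Subtype.val '' {B : NontrivialSubset α | B.1 ⊂ A.1} = 𝒫 A.1 \ {∅, A.1} := by
    ext C
    simp only [mem_image, mem_ofPred_eq, mem_sdiff, mem_powerset_iff, mem_insert_iff,
      mem_singleton_iff, not_or]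
    constructor
    · rintro ⟨B, hB, rfl⟩
      exact ⟨hB.subset, B.2.1.ne_empty, hB.ne⟩
    · rintro ⟨hC, hC0, hCA⟩
      have hCA' : C ⊂ A.1 := hC.ssubset_of_ne hCA
      exact ⟨⟨C, nonempty_iff_ne_empty.2 hC0, (hCA'.trans_subset (subset_univ _)).ne⟩,
        hCA', rfl⟩
  have hpair : {∅, A.1} ⊆ 𝒫 A.1 :=
    insert_subset (empty_subset _) (singleton_subset_iff.2 (mem_powerset subset_rfl))
  have hcount := ncard_sdiff_add_ncard_of_subset hpair
  rw [ncard_pair A.2.1.ne_empty.symm, ncard_powerset] at hcount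
  rw [← ncard_image_of_injective _ Subtype.val_injective, himage, hcount]

lemma card_neighborSet_add_four (A : NontrivialSubset α) :
    Nat.card ((subsetGraph α).neighborSet A) + 4 = 2 ^ A.1.ncard + 2 ^ A.1ᶜ.ncard := by
  have hsplit : (subsetGraph α).neighborSet A = {B | B.1 ⊂ A.1} ∪ {B | A.1 ⊂ B.1} := by
    ext B
    exact subsetGraph_adj.trans or_comm
  have hdisj : Disjoint {B : NontrivialSubset α | B.1 ⊂ A.1} {B | A.1 ⊂ B.1} :=
    disjoint_left.2 fun B (h₁ : B.1 ⊂ A.1) (h₂ : A.1 ⊂ B.1) => h₁.asymm h₂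
  have hup : {B : NontrivialSubset α | A.1 ⊂ B.1} = compl '' {B | B.1 ⊂ A.1ᶜ} := by
    rw [image_eq_preimage_of_inverse NontrivialSubset.compl_involutive
      NontrivialSubset.compl_involutive]
    ext B
    exact (compl_lt_compl_iff_lt (α := Set α)).symm
  have hlow : {B : NontrivialSubset α | B.1 ⊂ A.1}.ncard + 2 = 2 ^ A.1.ncard :=
    ncard_ssubset_add_two A
  have hhigh : {B : NontrivialSubset α | B.1 ⊂ A.1ᶜ}.ncard + 2 = 2 ^ A.1ᶜ.ncard :=
    ncard_ssubset_add_two (compl A)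
  rw [Nat.card_coe_set_eq, hsplit, ncard_union_eq hdisj, hup,
    ncard_image_of_injective _ NontrivialSubset.compl_involutive.injective]
  omega

def IsExtreme (A : NontrivialSubset α) : Prop := A.1.ncard = 1 ∨ A.1ᶜ.ncard = 1

lemma isExtreme_iff_card_neighborSet (A : NontrivialSubset α) :
    IsExtreme A ↔ Nat.card ((subsetGraph α).neighborSet A) + 4 = 2 + 2 ^ (Nat.card α - 1) := by
  rw [card_neighborSet_add_four, ← ncard_add_ncard_compl A.1,
    two_pow_add_two_pow_eq_iff ((ncard_pos).2 A.2.1) ((ncard_pos).2 (nonempty_compl.2 A.2.2))]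
  rfl

lemma isExtreme_apply (φ : subsetGraph α ≃g subsetGraph α) (A : NontrivialSubset α) :
    IsExtreme (φ A) ↔ IsExtreme A := by
  rw [isExtreme_iff_card_neighborSet, isExtreme_iff_card_neighborSet,
    Nat.card_congr (φ.mapNeighborSet A)]

lemma eq_compl_of_not_adj (h3 : 3 ≤ Nat.card α) {A B : NontrivialSubset α}
    (hA : A.1.ncard = 1) (hB : B.1ᶜ.ncard = 1) (hAB : ¬ (subsetGraph α).Adj A B) :
    B = compl A := by
  obtain ⟨a, ha⟩ := ncard_eq_one.1 hA
  obtain ⟨b, hb⟩ := ncard_eq_one.1 hB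
  suffices b = a by
    refine Subtype.ext ?_
    show B.1 = A.1ᶜ
    rw [← compl_compl B.1, hb, ha, this]
  by_contra hba
  have hB2 : 2 ≤ B.1.ncard := by have := ncard_add_ncard_compl B.1; omega
  refine hAB (subsetGraph_adj.2 (Or.inl (ssubset_of_subset_of_ne ?_ ?_)))
  · rw [ha, singleton_subset_iff, ← notMem_compl_iff, hb, mem_singleton_iff]
    exact Ne.symm hba
  · intro h; rw [← h, hA] at hB2; omega

section Nontrivial

variable [Nontrivial α]

lemma exists_permAut_eq (φ : subsetGraph α ≃g subsetGraph α)
    (h : ∀ a, (φ (single a)).1.ncard = 1) : ∃ σ, permAut σ = φ := by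
  choose g hg using fun a => ncard_eq_one.1 (h a)
  have hg_inj : Function.Injective g := fun a b hab => single_injective <|
    φ.injective (Subtype.ext ((hg a).trans ((congrArg _ hab).trans (hg b).symm)))
  refine ⟨Equiv.ofBijective g (Finite.injective_iff_bijective.1 hg_inj),
    aut_ext_single fun a => Subtype.ext ?_⟩
  exact (image_singleton).trans (hg a).symm

lemma forall_ncard_eq_one_or_forall_ncard_compl_eq_one (h3 : 3 ≤ Nat.card α)
    (φ : subsetGraph α ≃g subsetGraph α) :
    (∀ a, (φ (single a)).1.ncard = 1) ∨ ∀ a, (φ (single a)).1ᶜ.ncard = 1 := by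
  have hext (a : α) : IsExtreme (φ (single a)) :=
    (isExtreme_apply φ _).2 (Or.inl (ncard_singleton a))
  have hnadj (a b : α) : ¬ (subsetGraph α).Adj (φ (single a)) (φ (single b)) := by
    rw [φ.map_adj_iff]; exact not_adj_single a b
  -- If `single a` goes to a cosingleton and `single b` to a singleton, the two images are
  -- complementary; the image of `single c` for a third point `c` then coincides with one of them.
  by_contra! ⟨⟨a, ha⟩, ⟨b, hb⟩⟩
  have ha' := (hext a).resolve_left ha
  have hb' := (hext b).resolve_right hb
  have hab := eq_compl_of_not_adj h3 hb' ha' (hnadj b a)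
  obtain ⟨c, hca, hcb⟩ := ENat.exists_ne_ne_of_three_le
    (by rw [ENat.card_eq_coe_natCard]; exact_mod_cast h3) a b
  rcases hext c with hc | hc
  · have hac := eq_compl_of_not_adj h3 hc ha' (hnadj c a)
    exact hcb (single_injective (φ.injective (complAut.injective (hac.symm.trans hab))))
  · exact hca (single_injective (φ.injective
      ((eq_compl_of_not_adj h3 hb' hc (hnadj b c)).trans hab.symm)))

end Nontrivial

lemma autHom_injective (h3 : 3 ≤ Nat.card α) : Function.Injective (autHom (α := α)) := by
  have : Nontrivial α := Finite.one_lt_card_iff_nontrivial.1 (by omega)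
  refine (injective_iff_map_eq_one _).2 fun ⟨σ, ε⟩ h => ?_
  rcases ε.zmod_two_eq_one_or with rfl | rfl
  · rw [autHom_apply_one] at h
    refine Prod.ext (Equiv.ext fun a => singleton_injective ?_) rfl
    exact (image_singleton (f := σ)).symm.trans
      (congrArg Subtype.val (RelIso.ext_iff.1 h (single a)))
  · rw [autHom_apply_ofAdd_one] at h
    obtain ⟨a⟩ := (inferInstance : Nonempty α)
    have hcard : (σ '' ({a}ᶜ : Set α)).ncard = ({a} : Set α).ncard :=
      congrArg (fun A => A.1.ncard) (RelIso.ext_iff.1 h (single a))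
    have hsum := ncard_add_ncard_compl ({a} : Set α)
    rw [ncard_image_of_injective _ σ.injective, ncard_singleton] at hcard
    rw [ncard_singleton] at hsum
    omega

lemma autHom_surjective (h3 : 3 ≤ Nat.card α) : Function.Surjective (autHom (α := α)) := by
  have : Nontrivial α := Finite.one_lt_card_iff_nontrivial.1 (by omega)
  intro φ
  rcases forall_ncard_eq_one_or_forall_ncard_compl_eq_one h3 φ with h | h
  · obtain ⟨σ, hσ⟩ := exists_permAut_eq φ h
    exact ⟨(σ, 1), (autHom_apply_one σ).trans hσ⟩
  · obtain ⟨σ, hσ⟩ := exists_permAut_eq (complAut * φ) h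
    refine ⟨(σ, Multiplicative.ofAdd 1), ?_⟩
    rw [autHom_apply_ofAdd_one, (commute_permAut_complAut σ).eq, hσ, ← mul_assoc,
      complAut_mul_self, one_mul]

noncomputable def autEquiv (h3 : 3 ≤ Nat.card α) :
    (subsetGraph α ≃g subsetGraph α) ≃* Equiv.Perm α × Multiplicative (ZMod 2) :=
  (MulEquiv.ofBijective autHom ⟨autHom_injective h3, autHom_surjective h3⟩).symm

end Finite

end subsetGraph

end SubsetGraph

section LeftIdeal

variable [Semigroup S] {J L L' : Set S} {x : S}

lemma isLeftIdeal_range_mul_right (x : S) : IsLeftIdeal (range (· * x)) :=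
  ⟨⟨x * x, x, rfl⟩, by rintro s _ ⟨t, rfl⟩; exact ⟨s * t, mul_assoc s t x⟩⟩

lemma IsLeftIdeal.range_mul_right_subset (hJ : IsLeftIdeal J) (hx : x ∈ J) :
    range (· * x) ⊆ J :=
  range_subset_iff.2 fun s => hJ.2 s x hx

lemma IsMinimalLeftIdeal.range_mul_right_eq (hL : IsMinimalLeftIdeal L) (hx : x ∈ L) :
    range (· * x) = L :=
  hL.2 _ (isLeftIdeal_range_mul_right x) (hL.1.1.range_mul_right_subset hx)

lemma IsMinimalLeftIdeal.subset_of_mem (hL : IsMinimalLeftIdeal L) (hJ : IsLeftIdeal J)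
    (hxL : x ∈ L) (hxJ : x ∈ J) : L ⊆ J :=
  hL.range_mul_right_eq hxL ▸ hJ.range_mul_right_subset hxJ

lemma IsMinimalLeftIdeal.eq_of_mem (hL : IsMinimalLeftIdeal L) (hL' : IsMinimalLeftIdeal L')
    (hxL : x ∈ L) (hxL' : x ∈ L') : L = L' :=
  (hL.range_mul_right_eq hxL).symm.trans (hL'.range_mul_right_eq hxL')

lemma IsMinimalLeftIdeal.image_mul_right_subset (hL : IsMinimalLeftIdeal L) (s : S)
    (hJ : IsLeftIdeal J) (hmeet : ((· * s) '' L ∩ J).Nonempty) : (· * s) '' L ⊆ J := by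
  obtain ⟨_, ⟨x, hxL, rfl⟩, hxJ⟩ := hmeet
  have hK : {y ∈ L | y * s ∈ J} = L := hL.2 _
    ⟨⟨x, hxL, hxJ⟩, fun t y ⟨hyL, hyJ⟩ =>
      ⟨hL.1.1.2 t y hyL, mul_assoc t y s ▸ hJ.2 t _ hyJ⟩⟩
    (sep_subset _ _)
  rintro _ ⟨y, hyL, rfl⟩
  exact (hK.symm ▸ hyL : y ∈ {y ∈ L | y * s ∈ J}).2

lemma IsMinimalLeftIdeal.image_mul_right (hL : IsMinimalLeftIdeal L) (s : S) :
    IsMinimalLeftIdeal ((· * s) '' L) := by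
  obtain ⟨x, hx⟩ := hL.1.1.1
  have hideal : IsLeftIdeal ((· * s) '' L) :=
    ⟨⟨x * s, x, hx, rfl⟩, by
      rintro t _ ⟨y, hy, rfl⟩; exact ⟨t * y, hL.1.1.2 t y hy, mul_assoc t y s⟩⟩
  refine ⟨⟨hideal, fun huniv => hL.1.2 (univ_subset_iff.1 ?_)⟩, fun J hJ hJL => ?_⟩
  · exact huniv ▸ hL.image_mul_right_subset s hL.1.1 ⟨x, huniv ▸ mem_univ x, hx⟩
  · obtain ⟨y, hy⟩ := hJ.1
    exact hJL.antisymm (hL.image_mul_right_subset s hJ ⟨y, hJL hy, hy⟩)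

lemma sUnion_minimalLeftIdeals_eq_univ (hsimple : ∀ I : Set S, IsIdeal I → I = univ)
    (hL : IsMinimalLeftIdeal L) : ⋃₀ {L : Set S | IsMinimalLeftIdeal L} = univ := by
  refine hsimple _ ⟨⟨_, L, hL, hL.1.1.1.some_mem⟩, ?_, ?_⟩
  · rintro s x ⟨L', hL', hx⟩
    exact ⟨L', hL', hL'.1.1.2 s x hx⟩
  · rintro s x ⟨L', hL', hx⟩
    exact ⟨_, hL'.image_mul_right s, x, hx, rfl⟩

end LeftIdeal

section MinimalLeftIdealFamily

variable [Semigroup S] {ι : Type*} {I : ι → Set S}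

lemma biUnion_subset_biUnion_iff (hmin : ∀ i, IsMinimalLeftIdeal (I i))
    (hinj : Function.Injective I) {A B : Set ι} :
    ⋃ i ∈ A, I i ⊆ ⋃ i ∈ B, I i ↔ A ⊆ B := by
  refine ⟨fun h i hi => ?_, fun h => biUnion_subset_biUnion_left h⟩
  obtain ⟨x, hx⟩ := (hmin i).1.1.1
  obtain ⟨j, hj, hxj⟩ := mem_iUnion₂.1 (h (mem_biUnion hi hx))
  exact hinj ((hmin i).eq_of_mem (hmin j) hx hxj) ▸ hj

lemma isNontrivialLeftIdeal_biUnion (hmin : ∀ i, IsMinimalLeftIdeal (I i))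
    (hinj : Function.Injective I) (A : NontrivialSubset ι) :
    IsNontrivialLeftIdeal (⋃ i ∈ A.1, I i) := by
  obtain ⟨i, hi⟩ := A.2.1
  refine ⟨⟨⟨_, mem_biUnion hi (hmin i).1.1.1.some_mem⟩, fun s x hx => ?_⟩,
    fun huniv => A.2.2 ?_⟩
  · obtain ⟨j, hj, hxj⟩ := mem_iUnion₂.1 hx
    exact mem_biUnion hj ((hmin j).1.1.2 s x hxj)
  · exact univ_subset_iff.1 ((biUnion_subset_biUnion_iff hmin hinj).1
      ((subset_univ _).trans huniv.ge))

lemma IsLeftIdeal.biUnion_eq_self (hmin : ∀ i, IsMinimalLeftIdeal (I i))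
    (hcover : ∀ x, ∃ i, x ∈ I i) {J : Set S} (hJ : IsLeftIdeal J) :
    ⋃ i ∈ {i | I i ⊆ J}, I i = J := by
  refine (iUnion₂_subset fun i (hi : I i ⊆ J) => hi).antisymm fun x hx => ?_
  obtain ⟨i, hi⟩ := hcover x
  exact mem_biUnion ((hmin i).subset_of_mem hJ hi hx) hi

noncomputable def nontrivialLeftIdealOrderIso (hmin : ∀ i, IsMinimalLeftIdeal (I i))
    (hinj : Function.Injective I) (hcover : ∀ x, ∃ i, x ∈ I i) :
    NontrivialSubset ι ≃o {J : Set S // IsNontrivialLeftIdeal J} :=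
  RelIso.ofSurjective
    (OrderEmbedding.ofMapLEIff (fun A => ⟨_, isNontrivialLeftIdeal_biUnion hmin hinj A⟩)
      fun _ _ => biUnion_subset_biUnion_iff hmin hinj)
    fun J => by
      have hJ := J.2.1.biUnion_eq_self hmin hcover
      refine ⟨⟨{i | I i ⊆ J.1}, ?_, fun huniv => J.2.2 ?_⟩, Subtype.ext hJ⟩
      · obtain ⟨x, hx⟩ := J.2.1.1
        obtain ⟨i, hi⟩ := hcover x
        exact ⟨i, (hmin i).subset_of_mem J.2.1 hi hx⟩
      · rw [← hJ, huniv, biUnion_univ]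
        exact eq_univ_of_forall fun x => mem_iUnion.2 (hcover x)

lemma inclusionIdealGraph_adj {J K : IdealVert S} :
    (inclusionIdealGraph S).Adj J K ↔ J.1 ⊂ K.1 ∨ K.1 ⊂ J.1 :=
  fromRel_adj_of_irrefl fun J => ssubset_irrefl J.1

noncomputable def subsetGraphIsoInclusionIdealGraph (hmin : ∀ i, IsMinimalLeftIdeal (I i))
    (hinj : Function.Injective I) (hcover : ∀ x, ∃ i, x ∈ I i) :
    subsetGraph ι ≃g inclusionIdealGraph S where
  toEquiv := (nontrivialLeftIdealOrderIso hmin hinj hcover).toEquiv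
  map_rel_iff' {A B} := by
    rw [inclusionIdealGraph_adj, subsetGraph_adj]
    exact or_congr (nontrivialLeftIdealOrderIso hmin hinj hcover).lt_iff_lt
      (nontrivialLeftIdealOrderIso hmin hinj hcover).lt_iff_lt

end MinimalLeftIdealFamily

/-- For a completely simple semigroup with `n ≥ 3` minimal left ideals, the
automorphism group of `In(S)` is `Sₙ × ℤ₂`, of order `2 · n!`. -/
theorem stmt19 [Semigroup S] (hS : IsCompletelySimple S) (n : ℕ) (hn : 3 ≤ n)
    (I : Fin n → Set S) (hinj : Function.Injective I)
    (hmin : ∀ i, IsMinimalLeftIdeal (I i))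
    (hall : ∀ J : Set S, IsMinimalLeftIdeal J → ∃ i, J = I i) :
    Nonempty ((inclusionIdealGraph S ≃g inclusionIdealGraph S) ≃*
        Equiv.Perm (Fin n) × Multiplicative (ZMod 2)) ∧
      Nat.card (inclusionIdealGraph S ≃g inclusionIdealGraph S) = 2 * n.factorial := by
  have hcover (x : S) : ∃ i, x ∈ I i := by
    obtain ⟨L, hL, hxL⟩ : x ∈ ⋃₀ {L : Set S | IsMinimalLeftIdeal L} :=
      (sUnion_minimalLeftIdeals_eq_univ hS.1 (hmin ⟨0, by omega⟩)).symm ▸ mem_univ x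
    obtain ⟨i, rfl⟩ := hall L hL
    exact ⟨i, hxL⟩
  let e := (subsetGraphIsoInclusionIdealGraph hmin hinj hcover).autCongr.symm.trans
    (subsetGraph.autEquiv (by rwa [Nat.card_fin]))
  refine ⟨⟨e⟩, ?_⟩
  rw [Nat.card_congr e.toEquiv, Nat.card_prod, Nat.card_perm, Nat.card_fin, mul_comm,
    Nat.card_eq_fintype_card, Fintype.card_multiplicative, ZMod.card]
end
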